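/- Consider the 1D setting Ω = (0,1) with observation interval of length a ∈ (0,1) moving with speed 0 ≤ v < 1: ω(t) = (vt, vt + a) for t ∈ [0, (1-a)/v]. Every characteristic line t ↦ x₀ ± t (reflected at the boundary of (0,1) by the folding map) starting from any x₀ ∈ [0,1] enters ω(t) for some t ∈ (0, T) whenever T > 2(1-a)/(1+v); moreover no smaller T works for all rays, i.e. the optimal time is T₀ = 2(1-a)/(1+v). -/
import Mathlib
set_option maxHeartbeats 1000000
open Real Set

/-- The 2-periodic folding map of `ℝ` onto `[0,1]`. -/
noncomputable def fold (s : ℝ) : ℝ :=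
  if s - 2 * ⌊s / 2⌋ ≤ 1 then s - 2 * ⌊s / 2⌋ else 2 - (s - 2 * ⌊s / 2⌋)

lemma fold_eq_self {s : ℝ} (h0 : 0 ≤ s) (h1 : s ≤ 1) : fold s = s := by
  have hf : ⌊s / 2⌋ = 0 := by
    rw [Int.floor_eq_zero_iff]
    exact ⟨by linarith, by norm_num; linarith⟩
  simp only [fold, hf, Int.cast_zero, mul_zero, sub_zero]
  rw [if_pos h1]

lemma fold_eq_two_sub {s : ℝ} (h1 : 1 < s) (h2 : s < 2) : fold s = 2 - s := by
  have hf : ⌊s / 2⌋ = 0 := by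
    rw [Int.floor_eq_zero_iff]
    exact ⟨by linarith, by norm_num; linarith⟩
  simp only [fold, hf, Int.cast_zero, mul_zero, sub_zero]
  rw [if_neg (by linarith)]

lemma fold_add_two (s : ℝ) : fold (s + 2) = fold s := by
  have hf : ⌊(s + 2) / 2⌋ = ⌊s / 2⌋ + 1 := by
    rw [show (s + 2) / 2 = s / 2 + 1 by ring, Int.floor_add_one]
  have hval : s + 2 - 2 * (⌊(s + 2) / 2⌋ : ℝ) = s - 2 * ⌊s / 2⌋ := by
    rw [hf]; push_cast; ring
  simp only [fold, hval]

lemma fold_neg (s : ℝ) : fold (-s) = fold s := by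
  by_cases h : Int.fract (s / 2) = 0
  · obtain ⟨n, hn⟩ : ∃ n : ℤ, (n : ℝ) = s / 2 := ⟨⌊s/2⌋, by
      have := Int.self_sub_fract (s/2); rw [h] at this; linarith⟩
    have hs : s = 2 * n := by linarith
    have h1 : ⌊s / 2⌋ = n := by rw [← hn]; exact_mod_cast Int.floor_intCast n
    have h2 : ⌊(-s) / 2⌋ = -n := by
      rw [show (-s) / 2 = ((-n : ℤ) : ℝ) by push_cast; rw [hs]; ring]
      exact Int.floor_intCast _
    have e1 : s - 2 * (⌊s / 2⌋ : ℝ) = 0 := by rw [h1, hs]; ring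
    have e2 : -s - 2 * (⌊(-s) / 2⌋ : ℝ) = 0 := by rw [h2, hs]; push_cast; ring
    simp only [fold, e1, e2]
  · have hfr0 := (Int.fract_nonneg (s/2)).lt_of_ne (Ne.symm h)
    have hcast : (⌈s/2⌉ : ℝ) = (⌊s/2⌋ : ℝ) + 1 := by
      rw [Int.ceil_eq_add_one_sub_fract h, Int.fract]; ring
    have hfl := Int.floor_le (s/2)
    have hfl2 := Int.lt_floor_add_one (s/2)
    have hres : -s - 2 * (⌊(-s)/2⌋ : ℝ) = 2 - (s - 2 * ⌊s/2⌋) := by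
      rw [show (-s)/2 = -(s/2) by ring, Int.floor_neg]
      push_cast
      rw [hcast]; ring
    have hlt : (⌊s/2⌋ : ℝ) < s / 2 := by
      have := Int.self_sub_floor (s/2)
      linarith
    set r := s - 2 * (⌊s/2⌋ : ℝ) with hr
    have hr0 : 0 < r := by rw [hr]; linarith
    have hr2 : r < 2 := by rw [hr]; linarith
    simp only [fold, hres, ← hr]
    rcases lt_trichotomy r 1 with hc | hc | hc
    · rw [if_neg (by linarith), if_pos (by linarith)]; ring
    · rw [hc]; norm_num
    · rw [if_pos (by linarith), if_neg (by linarith)]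

lemma fold_two_sub (s : ℝ) : fold (2 - s) = fold s := by
  rw [show (2 : ℝ) - s = -s + 2 by ring, fold_add_two, fold_neg]

lemma enter (a v T u : ℝ) (ha0 : 0 < a) (ha1 : a < 1) (hv0 : 0 ≤ v) (hv1 : v < 1)
    (hT : 2 * (1 - a) / (1 + v) < T) (hu0 : 0 ≤ u) (hu2 : u < 2) :
    ∃ t ∈ Ioo (0:ℝ) T, fold (u + t) ∈ Ioo (min (v * t) (1 - a)) (min (v * t) (1 - a) + a) := by
  have h1v : (0:ℝ) < 1 + v := by linarith
  have h1v' : (0:ℝ) < 1 - v := by linarith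
  have h2' : (0:ℝ) ≤ 2 := by norm_num
  have hT0pos : 0 < 2 * (1 - a) / (1 + v) := div_pos (by linarith) h1v
  have hTpos : 0 < T := lt_trans hT0pos hT
  rcases lt_or_ge u a with hA | hA
  · -- Case A : u < a
    refine ⟨min (min (1 - a) T) ((a - u) / (1 - v)) / 2, ?_⟩
    set t := min (min (1 - a) T) ((a - u) / (1 - v)) / 2 with htdef
    have ht1 : t ≤ (1 - a) / 2 :=
      div_le_div_of_nonneg_right (le_trans (min_le_left _ _) (min_le_left _ _)) h2'
    have ht2 : t ≤ T / 2 :=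
      div_le_div_of_nonneg_right (le_trans (min_le_left _ _) (min_le_right _ _)) h2'
    have ht3 : t ≤ (a - u) / (1 - v) / 2 :=
      div_le_div_of_nonneg_right (min_le_right _ _) h2'
    have htpos : 0 < t := by
      apply div_pos _ two_pos
      exact lt_min (lt_min (by linarith) hTpos) (div_pos (by linarith) h1v')
    have hvt : v * t ≤ t := by nlinarith
    have hmin : min (v * t) (1 - a) = v * t := min_eq_left (by linarith)
    have hfold : fold (u + t) = u + t := fold_eq_self (by linarith) (by linarith)
    have ht3' : t * ((1 - v) * 2) ≤ a - u := by
      rw [div_div, le_div_iff₀ (by positivity)] at ht3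
      exact ht3
    refine ⟨⟨htpos, by linarith⟩, ?_⟩
    rw [hmin, hfold]
    exact ⟨by nlinarith, by nlinarith⟩
  · rcases le_or_gt u (2 - a) with hC | hB
    · -- Case C : a ≤ u ≤ 2 - a
      obtain ⟨D, hDpos, hDT⟩ : ∃ D : ℝ, 0 < D ∧ (1 + v) * T = 2 * (1 - a) + (1 + v) * D := by
        refine ⟨T - 2 * (1 - a) / (1 + v), by linarith, ?_⟩
        field_simp
        ring
      obtain ⟨δ, hδpos, hδ1, hδ2, hδ3⟩ :
          ∃ δ : ℝ, 0 < δ ∧ δ ≤ 1 / 2 ∧ a * δ ≤ D * (1 + v) / 2 ∧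
            a * δ ≤ (1 - a) * (1 - v) / 2 := by
        refine ⟨min (min 1 (D * (1 + v) / a)) ((1 - a) * (1 - v) / a) / 2, ?_, ?_, ?_, ?_⟩
        · apply div_pos _ two_pos
          exact lt_min (lt_min one_pos (div_pos (mul_pos hDpos h1v) ha0))
            (div_pos (mul_pos (by linarith) h1v') ha0)
        · exact div_le_div_of_nonneg_right (le_trans (min_le_left _ _) (min_le_left _ _)) h2'
        · have h1 : min (min 1 (D * (1 + v) / a)) ((1 - a) * (1 - v) / a) / 2
              ≤ D * (1 + v) / a / 2 :=
            div_le_div_of_nonneg_right (le_trans (min_le_left _ _) (min_le_right _ _)) h2'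
          rw [div_div, le_div_iff₀ (by positivity)] at h1
          linarith
        · have h1 : min (min 1 (D * (1 + v) / a)) ((1 - a) * (1 - v) / a) / 2
              ≤ (1 - a) * (1 - v) / a / 2 :=
            div_le_div_of_nonneg_right (min_le_right _ _) h2'
          rw [div_div, le_div_iff₀ (by positivity)] at h1
          linarith
      obtain ⟨t, hteq⟩ : ∃ t : ℝ, (1 + v) * t = 2 - u - a * (1 - δ) :=
        ⟨(2 - u - a * (1 - δ)) / (1 + v), mul_div_cancel₀ _ (ne_of_gt h1v)⟩
      have haδ : 0 < a * δ := mul_pos ha0 hδpos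
      have haδ' : a * δ ≤ a / 2 := by nlinarith
      have hexp : t + v * t = 2 - u - a + a * δ := by nlinarith [hteq]
      have hTexp : T + v * T = 2 - 2 * a + (D + v * D) := by nlinarith [hDT]
      have hDD : 0 < D + v * D := by nlinarith [mul_nonneg hv0 hDpos.le]
      have htpos : 0 < t := by
        by_contra hcon
        push_neg at hcon
        have := mul_nonpos_of_nonneg_of_nonpos hv0 hcon
        linarith
      have htT : t < T := by
        by_contra hcon
        push_neg at hcon
        have := mul_le_mul_of_nonneg_left hcon hv0
        linarith
      have hs1 : 1 < u + t := by
        by_contra hcon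
        push_neg at hcon
        have h1 : v * t ≤ v * (1 - u) := mul_le_mul_of_nonneg_left (by linarith) hv0
        have h2 : v * (1 - u) ≤ v * (1 - a) := mul_le_mul_of_nonneg_left (by linarith) hv0
        have h3 : v * (1 - a) ≤ 1 * (1 - a) := mul_le_mul_of_nonneg_right hv1.le (by linarith)
        linarith
      have hs2 : u + t < 2 := by
        by_contra hcon
        push_neg at hcon
        have h1 : v * (2 - u) ≤ v * t := mul_le_mul_of_nonneg_left (by linarith) hv0
        have h2 : 0 ≤ v * (2 - u) := mul_nonneg hv0 (by linarith)
        linarith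
      have hvexp : v * (t + v * t) = v * (2 - u - a + a * δ) := by rw [hexp]
      have hvt : v * t ≤ 1 - a := by
        nlinarith [hvexp, mul_nonneg hv0 (mul_nonneg hv0 htpos.le),
          mul_nonneg hv0 (by linarith : (0:ℝ) ≤ u - a),
          mul_nonneg hv0 haδ.le, mul_pos h1v' (show (0:ℝ) < 1 - a by linarith)]
      have hmid : 2 - (u + t) = v * t + a * (1 - δ) := by nlinarith [hexp]
      have hfold : fold (u + t) = 2 - (u + t) := fold_eq_two_sub hs1 hs2
      refine ⟨t, ⟨htpos, htT⟩, ?_⟩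
      rw [min_eq_left hvt, hfold, hmid]
      exact ⟨by nlinarith [haδ, haδ'], by nlinarith [haδ]⟩
    · -- Case B : 2 - a < u < 2
      refine ⟨min (min (2 - u) (1 - a)) T / 2, ?_⟩
      set t := min (min (2 - u) (1 - a)) T / 2 with htdef
      have ht1 : t ≤ (2 - u) / 2 :=
        div_le_div_of_nonneg_right (le_trans (min_le_left _ _) (min_le_left _ _)) h2'
      have ht1' : t ≤ (1 - a) / 2 :=
        div_le_div_of_nonneg_right (le_trans (min_le_left _ _) (min_le_right _ _)) h2'
      have ht2 : t ≤ T / 2 :=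
        div_le_div_of_nonneg_right (min_le_right _ _) h2'
      have htpos : 0 < t := by
        apply div_pos _ two_pos
        exact lt_min (lt_min (by linarith) (by linarith)) hTpos
      have hu1 : 1 < u := by linarith
      have hs1 : 1 < u + t := by linarith
      have hs2 : u + t < 2 := by linarith
      have hvt : v * t ≤ t := by nlinarith
      have hmin : min (v * t) (1 - a) = v * t := min_eq_left (by linarith)
      have hfold : fold (u + t) = 2 - (u + t) := fold_eq_two_sub hs1 hs2
      refine ⟨⟨htpos, by linarith⟩, ?_⟩
      rw [hmin, hfold]
      exact ⟨by nlinarith, by nlinarith⟩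

theorem stmt_13 (a v : ℝ) (ha : a ∈ Ioo (0 : ℝ) 1) (hv0 : 0 ≤ v) (hv1 : v < 1) :
    (∀ T : ℝ, 2 * (1 - a) / (1 + v) < T →
      ∀ x₀ ∈ Icc (0 : ℝ) 1, ∀ ε : ℝ, (ε = 1 ∨ ε = -1) →
        ∃ t ∈ Ioo (0 : ℝ) T,
          fold (x₀ + ε * t) ∈ Ioo (min (v * t) (1 - a)) (min (v * t) (1 - a) + a)) ∧
    (∀ T : ℝ,
      (∀ x₀ ∈ Icc (0 : ℝ) 1, ∀ ε : ℝ, (ε = 1 ∨ ε = -1) →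
        ∃ t ∈ Ioo (0 : ℝ) T,
          fold (x₀ + ε * t) ∈ Ioo (min (v * t) (1 - a)) (min (v * t) (1 - a) + a)) →
      2 * (1 - a) / (1 + v) ≤ T) := by
  obtain ⟨ha0, ha1⟩ := ha
  have h1v : (0:ℝ) < 1 + v := by linarith
  constructor
  · intro T hT x₀ hx ε hε
    rcases hε with rfl | rfl
    · obtain ⟨t, ht, hm⟩ :=
        enter a v T x₀ ha0 ha1 hv0 hv1 hT hx.1 (lt_of_le_of_lt hx.2 one_lt_two)
      exact ⟨t, ht, by rwa [one_mul]⟩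
    · rcases eq_or_lt_of_le hx.1 with h0 | h0
      · obtain ⟨t, ht, hm⟩ := enter a v T 0 ha0 ha1 hv0 hv1 hT le_rfl two_pos
        refine ⟨t, ht, ?_⟩
        rw [show x₀ + (-1) * t = -(0 + t) by rw [← h0]; ring, fold_neg]
        exact hm
      · obtain ⟨t, ht, hm⟩ :=
          enter a v T (2 - x₀) ha0 ha1 hv0 hv1 hT (by linarith [hx.2]) (by linarith)
        refine ⟨t, ht, ?_⟩
        rw [show x₀ + (-1) * t = 2 - ((2 - x₀) + t) by ring, fold_two_sub]
        exact hm
  · intro T h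
    obtain ⟨t, ⟨ht0, htT⟩, hm⟩ := h a ⟨ha0.le, ha1.le⟩ 1 (Or.inl rfl)
    rw [one_mul] at hm
    by_contra hcon
    push_neg at hcon
    have hT0 : (1 + v) * (2 * (1 - a) / (1 + v)) = 2 * (1 - a) := by
      field_simp
    have hT0' : 2 * (1 - a) / (1 + v) + v * (2 * (1 - a) / (1 + v)) = 2 - 2 * a := by
      nlinarith [hT0]
    have htT0 : t < 2 * (1 - a) / (1 + v) := lt_trans htT hcon
    have hvQ : v * t ≤ v * (2 * (1 - a) / (1 + v)) :=
      mul_le_mul_of_nonneg_left htT0.le hv0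
    have hvQ2 : v * (2 * (1 - a) / (1 + v)) < 1 - a := by
      nlinarith [hT0', mul_le_mul_of_nonneg_left hT0'.le hv0,
        mul_nonneg (mul_nonneg hv0 hv0) (div_nonneg (by linarith) h1v.le)]
    have hvt : v * t < 1 - a := lt_of_le_of_lt hvQ hvQ2
    rw [min_eq_left hvt.le] at hm
    have hQ2 : 2 * (1 - a) / (1 + v) < 2 - a := by
      rw [div_lt_iff₀ h1v]
      nlinarith [mul_nonneg hv0 (show (0:ℝ) ≤ 2 - a by linarith)]
    rcases le_or_gt t (1 - a) with hc | hc
    · rw [fold_eq_self (by linarith) (by linarith)] at hm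
      have : v * t < 1 * t := mul_lt_mul_of_pos_right hv1 ht0
      linarith [hm.2]
    · rw [fold_eq_two_sub (by linarith) (by linarith)] at hm
      linarith [hm.2]
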